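/- arXiv:1806.00107 — 2 statements merged into one kernel-verified Lean document; each statement's English description precedes it below -/
import Mathlib

section
/- The vacuum-plus-two-particle state ψ = (√3/2)Ω + (1/(2√2))(a†)²Ω is a unit vector, and for every ω > 0, L > 0 and θ ∈ ℝ, setting f = (2ωL³)^{-1/2} e^{iθ}, the normal-ordered single-mode energy-density operator T = ω²( -f²·a∘a - (conj f)²·a†∘a† + 2|f|²·a†∘a ) satisfies ⟨ψ, Tψ⟩ = (ω/(2L³))·(1 - (√6/2)·cos(2θ)). In particular, since √6/2 > 1, there exist values of θ (e.g. θ = 0) for which ⟨ψ, Tψ⟩ < 0, so this state violates the pointwise quantum null energy condition ⟨T⟩ ≥ 0. -/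
/-!
By adjointness, the expectation of the normal-ordered operator in any state `ψ` is
`ω² (2|f|² ‖aψ‖² - 2 Re (f² ⟪ψ, a²ψ⟫))`, with `|f|² = 1/(2ωL³)` and `f² = |f|² e^{2iθ}`.
For `ψ = αΩ + β(a†)²Ω` the commutation relation gives `aψ = 2β a†Ω`, `a²ψ = 2βΩ` and
`‖a†x‖² = ‖x‖² + ‖ax‖²`, so `‖ψ‖² = α² + 2β²`, `‖aψ‖² = 4β²`, `⟪ψ, a²ψ⟫ = 2αβ`, and the expectation
is `(ω/(2L³))(8β² - 4αβ cos 2θ)`. For `α = √3/2`, `β = 1/(2√2)` this is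
`(ω/(2L³))(1 - (√6/2) cos 2θ)`, negative at `θ = 0` because `√6 > 2`.
-/

/-- The single-mode amplitude `f = (2ωL³)^{-1/2} e^{iθ}`. -/
noncomputable def modeAmp (ω L θ : ℝ) : ℂ :=
  (((2 * ω * L ^ 3 : ℝ) ^ (-(1 / 2 : ℝ)) : ℝ) : ℂ) * Complex.exp (θ * Complex.I)

/-- The normal-ordered single-mode energy-density operator
`T = ω²( -f²·a∘a - (conj f)²·a†∘a† + 2|f|²·a†∘a )`. -/
noncomputable def energyDensityOp {H : Type*} [NormedAddCommGroup H] [InnerProductSpace ℂ H]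
    (a adj : H →ₗ[ℂ] H) (ω L θ : ℝ) : H →ₗ[ℂ] H :=
  ((ω ^ 2 : ℝ) : ℂ) •
    ( -((modeAmp ω L θ) ^ 2) • (a ∘ₗ a)
      - ((starRingEnd ℂ) (modeAmp ω L θ)) ^ 2 • (adj ∘ₗ adj)
      + ((2 * ‖modeAmp ω L θ‖ ^ 2 : ℝ) : ℂ) • (adj ∘ₗ a))

theorem norm_modeAmp_sq {ω L : ℝ} (h : 0 ≤ ω * L ^ 3) (θ : ℝ) :
    ‖modeAmp ω L θ‖ ^ 2 = (2 * ω * L ^ 3)⁻¹ := by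
  have hbase : 0 ≤ 2 * ω * L ^ 3 := by linarith
  rw [modeAmp, norm_mul, Complex.norm_exp_ofReal_mul_I, mul_one, Complex.norm_real,
    Real.norm_of_nonneg (Real.rpow_nonneg hbase _), ← Real.rpow_natCast, ← Real.rpow_mul hbase]
  norm_num [Real.rpow_neg_one]

theorem re_modeAmp_sq (ω L θ : ℝ) :
    (modeAmp ω L θ ^ 2).re = ‖modeAmp ω L θ‖ ^ 2 * Real.cos (2 * θ) := by
  have hsq : modeAmp ω L θ ^ 2 = ((((2 * ω * L ^ 3) ^ (-(1 / 2 : ℝ))) ^ 2 : ℝ) : ℂ)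
      * Complex.exp ((2 * θ : ℝ) * Complex.I) := by
    rw [modeAmp, mul_pow, ← Complex.exp_nat_mul]
    push_cast
    ring_nf
  rw [hsq, Complex.re_ofReal_mul, Complex.exp_ofReal_mul_I_re, modeAmp, norm_mul,
    Complex.norm_exp_ofReal_mul_I, mul_one, Complex.norm_real, Real.norm_eq_abs, sq_abs]

section SingleMode

variable {H : Type*} [NormedAddCommGroup H] [InnerProductSpace ℂ H] {a adj : H →ₗ[ℂ] H}

theorem inner_energyDensityOp_self (hAdj : ∀ x y : H, inner ℂ (a x) y = inner ℂ x (adj y))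
    (ω L θ : ℝ) (ψ : H) :
    inner ℂ ψ (energyDensityOp a adj ω L θ ψ)
      = ((ω ^ 2 * (2 * ‖modeAmp ω L θ‖ ^ 2 * ‖a ψ‖ ^ 2
          - 2 * (modeAmp ω L θ ^ 2 * inner ℂ ψ (a (a ψ))).re) : ℝ) : ℂ) := by
  have h_pair : inner ℂ ψ (adj (adj ψ)) = starRingEnd ℂ (inner ℂ ψ (a (a ψ))) := by
    rw [← hAdj, ← hAdj, inner_conj_symm]
  have h_number : inner ℂ ψ (adj (a ψ)) = ((‖a ψ‖ ^ 2 : ℝ) : ℂ) := by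
    rw [← hAdj]
    exact_mod_cast inner_self_eq_norm_sq_to_K (a ψ)
  have h_re := Complex.add_conj (modeAmp ω L θ ^ 2 * inner ℂ ψ (a (a ψ)))
  rw [map_mul, map_pow] at h_re
  simp only [energyDensityOp, LinearMap.smul_apply, LinearMap.add_apply, LinearMap.sub_apply,
    LinearMap.comp_apply, inner_smul_right, inner_add_right, inner_sub_right, h_pair, h_number]
  push_cast at h_re ⊢
  linear_combination (-(ω : ℂ) ^ 2) * h_re

theorem annihilation_creation_apply (hCCR : a ∘ₗ adj - adj ∘ₗ a = LinearMap.id) (x : H) :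
    a (adj x) = x + adj (a x) := by
  simpa only [LinearMap.sub_apply, LinearMap.comp_apply, LinearMap.id_apply, sub_eq_iff_eq_add]
    using LinearMap.congr_fun hCCR x

theorem norm_creation_sq (hAdj : ∀ x y : H, inner ℂ (a x) y = inner ℂ x (adj y))
    (hCCR : a ∘ₗ adj - adj ∘ₗ a = LinearMap.id) (x : H) :
    ‖adj x‖ ^ 2 = ‖x‖ ^ 2 + ‖a x‖ ^ 2 := by
  have h : inner ℂ (adj x) (adj x) = inner ℂ x x + inner ℂ (a x) (a x) := by
    rw [← hAdj, annihilation_creation_apply hCCR, inner_add_left, ← inner_conj_symm (adj (a x)) x,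
      ← hAdj, inner_conj_symm]
  simp only [inner_self_eq_norm_sq_to_K] at h
  exact_mod_cast h

theorem inner_vacuum_creation (hAdj : ∀ x y : H, inner ℂ (a x) y = inner ℂ x (adj y))
    {Ω : H} (hvac : a Ω = 0) (x : H) : inner ℂ Ω (adj x) = 0 := by
  rw [← hAdj, hvac, inner_zero_left]

def vacuumTwoParticleState (adj : H →ₗ[ℂ] H) (Ω : H) (α β : ℝ) : H :=
  (α : ℂ) • Ω + (β : ℂ) • adj (adj Ω)

theorem annihilation_vacuumTwoParticleState (hCCR : a ∘ₗ adj - adj ∘ₗ a = LinearMap.id)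
    {Ω : H} (hvac : a Ω = 0) (α β : ℝ) :
    a (vacuumTwoParticleState adj Ω α β) = ((2 * β : ℝ) : ℂ) • adj Ω := by
  simp only [vacuumTwoParticleState, map_add, map_smul, annihilation_creation_apply hCCR, hvac,
    map_zero, add_zero, smul_zero, zero_add]
  push_cast
  rw [mul_comm, mul_smul, two_smul]

theorem norm_vacuumTwoParticleState_sq (hAdj : ∀ x y : H, inner ℂ (a x) y = inner ℂ x (adj y))
    (hCCR : a ∘ₗ adj - adj ∘ₗ a = LinearMap.id) {Ω : H} (hΩ : ‖Ω‖ = 1) (hvac : a Ω = 0)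
    (α β : ℝ) : ‖vacuumTwoParticleState adj Ω α β‖ ^ 2 = α ^ 2 + 2 * β ^ 2 := by
  have h_orth : inner ℂ ((α : ℂ) • Ω) ((β : ℂ) • adj (adj Ω)) = 0 := by
    rw [inner_smul_left, inner_smul_right, inner_vacuum_creation hAdj hvac, mul_zero, mul_zero]
  have h_two : ‖adj (adj Ω)‖ ^ 2 = 2 := by
    rw [norm_creation_sq hAdj hCCR, norm_creation_sq hAdj hCCR, annihilation_creation_apply hCCR,
      hvac, map_zero, add_zero, hΩ, norm_zero]
    norm_num
  rw [vacuumTwoParticleState, sq, norm_add_sq_eq_norm_sq_add_norm_sq_of_inner_eq_zero _ _ h_orth,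
    ← sq, ← sq, norm_smul, norm_smul, mul_pow, mul_pow, h_two, hΩ, Complex.norm_real,
    Complex.norm_real, Real.norm_eq_abs, Real.norm_eq_abs, sq_abs, sq_abs]
  ring

theorem inner_vacuumTwoParticleState_annihilation_sq
    (hAdj : ∀ x y : H, inner ℂ (a x) y = inner ℂ x (adj y))
    (hCCR : a ∘ₗ adj - adj ∘ₗ a = LinearMap.id) {Ω : H} (hΩ : ‖Ω‖ = 1) (hvac : a Ω = 0)
    (α β : ℝ) :
    inner ℂ (vacuumTwoParticleState adj Ω α β) (a (a (vacuumTwoParticleState adj Ω α β)))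
      = ((2 * α * β : ℝ) : ℂ) := by
  have h_vac : inner ℂ Ω Ω = 1 := by
    rw [inner_self_eq_norm_sq_to_K, hΩ]
    norm_num
  have h_orth : inner ℂ (adj (adj Ω)) Ω = 0 := by
    rw [← inner_conj_symm, inner_vacuum_creation hAdj hvac, map_zero]
  rw [annihilation_vacuumTwoParticleState hCCR hvac, map_smul, annihilation_creation_apply hCCR,
    hvac, map_zero, add_zero, vacuumTwoParticleState, inner_add_left, inner_smul_left,
    inner_smul_left, inner_smul_right, inner_smul_right, h_vac, h_orth]
  simp only [Complex.conj_ofReal]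
  push_cast
  ring

end SingleMode

/-- The vacuum-plus-two-particle state
`ψ = (√3/2)Ω + (1/(2√2))(a†)²Ω` is a unit vector, and for every `ω > 0`, `L > 0`, `θ ∈ ℝ`
the normal-ordered single-mode energy-density operator satisfies
`⟨ψ, Tψ⟩ = (ω/(2L³))(1 - (√6/2)cos(2θ))`; in particular there exist values of `θ` for which
`⟨ψ, Tψ⟩ < 0`, so this state violates the pointwise quantum null energy condition `⟨T⟩ ≥ 0`. -/
theorem vacuum_plus_two_particles_violates_NEC
    (H : Type*) [NormedAddCommGroup H] [InnerProductSpace ℂ H]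
    (a adj : H →ₗ[ℂ] H)
    (hAdj : ∀ x y : H, (inner ℂ (a x) y : ℂ) = (inner ℂ x (adj y) : ℂ))
    (hCCR : a ∘ₗ adj - adj ∘ₗ a = (LinearMap.id : H →ₗ[ℂ] H))
    (Ω : H) (hΩ : ‖Ω‖ = 1) (hvac : a Ω = 0)
    (ψ : H)
    (hψ : ψ = ((Real.sqrt 3 / 2 : ℝ) : ℂ) • Ω
        + ((1 / (2 * Real.sqrt 2) : ℝ) : ℂ) • adj (adj Ω)) :
    ‖ψ‖ = 1
    ∧ (∀ ω L θ : ℝ, 0 < ω → 0 < L →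
        (inner ℂ ψ (energyDensityOp a adj ω L θ ψ) : ℂ)
          = ((ω / (2 * L ^ 3) * (1 - Real.sqrt 6 / 2 * Real.cos (2 * θ)) : ℝ) : ℂ))
    ∧ (∀ ω L : ℝ, 0 < ω → 0 < L →
        ∃ θ : ℝ, (inner ℂ ψ (energyDensityOp a adj ω L θ ψ) : ℂ).re < 0) := by
  replace hψ : ψ = vacuumTwoParticleState adj Ω (√3 / 2) (1 / (2 * √2)) := hψ
  have h3 : √3 ^ 2 = 3 := Real.sq_sqrt (by norm_num)
  have h2 : √2 ^ 2 = 2 := Real.sq_sqrt (by norm_num)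
  have h6 : √6 = √3 * √2 := by rw [← Real.sqrt_mul (by norm_num)]; norm_num
  have h_expect : ∀ ω L θ : ℝ, 0 < ω → 0 < L →
      (inner ℂ ψ (energyDensityOp a adj ω L θ ψ) : ℂ)
        = ((ω / (2 * L ^ 3) * (1 - √6 / 2 * Real.cos (2 * θ)) : ℝ) : ℂ) := by
    intro ω L θ hω hL
    rw [inner_energyDensityOp_self hAdj, hψ,
      inner_vacuumTwoParticleState_annihilation_sq hAdj hCCR hΩ hvac,
      annihilation_vacuumTwoParticleState hCCR hvac, Complex.re_mul_ofReal, re_modeAmp_sq,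
      norm_modeAmp_sq (by positivity), norm_smul, mul_pow, norm_creation_sq hAdj hCCR, hΩ, hvac,
      norm_zero, Complex.norm_real, Real.norm_eq_abs, sq_abs, h6]
    congr 1
    field_simp
    rw [h2]
    ring
  refine ⟨?_, h_expect, fun ω L hω hL => ⟨0, ?_⟩⟩
  · have h_sq := norm_vacuumTwoParticleState_sq hAdj hCCR hΩ hvac (√3 / 2) (1 / (2 * √2))
    rw [← hψ, div_pow, div_pow, mul_pow, h3, h2] at h_sq
    rw [← sq_eq_sq₀ (norm_nonneg ψ) zero_le_one, h_sq]
    norm_num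
  · have h6_gt : 2 < √6 := by
      rw [Real.lt_sqrt (by norm_num)]; norm_num
    rw [h_expect ω L 0 hω hL, Complex.ofReal_re, mul_zero, Real.cos_zero, mul_one]
    exact mul_neg_of_pos_of_neg (by positivity) (by linarith)
end

section
/- Let b ∈ (0, ∞] and let θ : [0, b) → ℝ be differentiable with θ'(λ) ≤ -θ(λ)²/2 for all λ ∈ [0, b), and suppose θ(0) < 0. Then b ≤ -2/θ(0); i.e. the solution cannot be extended beyond affine parameter 2/|θ(0)| (the expansion diverges to -∞ in finite affine parameter). -/
/-!
Since `θ' ≤ -θ²/2 ≤ 0`, `θ` decreases and so stays negative, and there the inequality says exactly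
that `(1/θ)' = -θ'/θ² ≥ 1/2`. Hence `1/θ(λ) ≥ 1/θ(0) + λ/2`, and since `1/θ` stays negative this forces
`λ < -2/θ(0)`: the parameter interval on which `θ` is defined cannot reach `-2/θ(0)`.
-/

open Set

theorem Convex.monotoneOn_of_hasDerivWithinAt_nonneg {D : Set ℝ} (hD : Convex ℝ D)
    {f f' : ℝ → ℝ} (hf : ∀ x ∈ D, HasDerivWithinAt f (f' x) D x)
    (hf'₀ : ∀ x ∈ D, 0 ≤ f' x) : MonotoneOn f D :=
  _root_.monotoneOn_of_hasDerivWithinAt_nonneg hD (fun x hx ↦ (hf x hx).continuousWithinAt)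
    (fun x hx ↦ (hf x (interior_subset hx)).mono interior_subset)
    (fun x hx ↦ hf'₀ x (interior_subset hx))

theorem Convex.antitoneOn_of_hasDerivWithinAt_nonpos {D : Set ℝ} (hD : Convex ℝ D)
    {f f' : ℝ → ℝ} (hf : ∀ x ∈ D, HasDerivWithinAt f (f' x) D x)
    (hf'₀ : ∀ x ∈ D, f' x ≤ 0) : AntitoneOn f D :=
  _root_.antitoneOn_of_hasDerivWithinAt_nonpos hD (fun x hx ↦ (hf x hx).continuousWithinAt)
    (fun x hx ↦ (hf x (interior_subset hx)).mono interior_subset)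
    (fun x hx ↦ hf'₀ x (interior_subset hx))

namespace Convex

variable {S : Set ℝ} {θ dθ : ℝ → ℝ}

theorem monotoneOn_inv_sub_half_of_le_neg_sq_div_two (hS : Convex ℝ S)
    (hθ : ∀ x ∈ S, HasDerivWithinAt θ (dθ x) S x) (hineq : ∀ x ∈ S, dθ x ≤ -θ x ^ 2 / 2)
    (hneg : ∀ x ∈ S, θ x < 0) : MonotoneOn (fun x ↦ (θ x)⁻¹ - x / 2) S := by
  refine hS.monotoneOn_of_hasDerivWithinAt_nonneg (f' := fun x ↦ -dθ x / θ x ^ 2 - 1 / 2)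
    (fun x hx ↦ ((hθ x hx).inv (hneg x hx).ne).sub ((hasDerivWithinAt_id x S).div_const 2))
    fun x hx ↦ ?_
  rw [sub_nonneg, le_div_iff₀ (sq_pos_of_neg (hneg x hx))]
  linarith [hineq x hx]

theorem sub_lt_neg_two_div_of_le_neg_sq_div_two (hS : Convex ℝ S)
    (hθ : ∀ x ∈ S, HasDerivWithinAt θ (dθ x) S x) (hineq : ∀ x ∈ S, dθ x ≤ -θ x ^ 2 / 2)
    {a l : ℝ} (ha : a ∈ S) (hl : l ∈ S) (hal : a ≤ l) (hθa : θ a < 0) : l - a < -2 / θ a := by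
  have hT : Convex ℝ (S ∩ Ici a) := hS.inter (convex_Ici a)
  have hθ_anti : AntitoneOn θ S :=
    hS.antitoneOn_of_hasDerivWithinAt_nonpos hθ fun x hx ↦ by
      linarith [hineq x hx, sq_nonneg (θ x)]
  have hneg : ∀ x ∈ S ∩ Ici a, θ x < 0 := fun x hx ↦ (hθ_anti ha hx.1 hx.2).trans_lt hθa
  have hmono := hT.monotoneOn_inv_sub_half_of_le_neg_sq_div_two
    (fun x hx ↦ (hθ x hx.1).mono inter_subset_left) (fun x hx ↦ hineq x hx.1) hneg
    ⟨ha, self_mem_Ici⟩ ⟨hl, hal⟩ hal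
  have hinv_neg : (θ l)⁻¹ < 0 := inv_lt_zero.2 (hneg l ⟨hl, hal⟩)
  dsimp only at hmono
  rw [div_eq_mul_inv]
  linarith

end Convex

theorem focusing_caustic_formation_general (b : EReal)
    (θ dθ : ℝ → ℝ)
    (hdiff : ∀ l : ℝ, 0 ≤ l → (l : EReal) < b →
      HasDerivWithinAt θ (dθ l) {x : ℝ | 0 ≤ x ∧ (x : EReal) < b} l)
    (hineq : ∀ l : ℝ, 0 ≤ l → (l : EReal) < b → dθ l ≤ -θ l ^ 2 / 2)
    (h0 : θ 0 < 0) :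
    b ≤ ((-2 / θ 0 : ℝ) : EReal) := by
  set S : Set ℝ := {x : ℝ | 0 ≤ x ∧ (x : EReal) < b}
  have hS : Convex ℝ S :=
    ((ordConnected_Ici (a := 0)).inter
      ((ordConnected_Iio (a := b)).preimage_mono EReal.coe_strictMono.monotone)).convex
  by_contra! hb
  have hc : 0 ≤ -2 / θ 0 := div_nonneg_of_nonpos (by norm_num) h0.le
  have h0S : (0 : ℝ) ∈ S := ⟨le_rfl, lt_of_le_of_lt (EReal.coe_le_coe_iff.2 hc) hb⟩
  have hcaustic := hS.sub_lt_neg_two_div_of_le_neg_sq_div_two (fun x hx ↦ hdiff x hx.1 hx.2)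
    (fun x hx ↦ hineq x hx.1 hx.2) h0S ⟨hc, hb⟩ hc h0
  linarith

/-- Let `b ∈ (0, ∞]` and let `θ : [0, b) → ℝ` be differentiable with
`θ'(λ) ≤ -θ(λ)²/2` on `[0, b)`, and suppose `θ(0) < 0`.  Then `b ≤ -2/θ(0)`: the expansion
diverges to `-∞` within finite affine parameter `2/|θ(0)|` (caustic formation). -/
theorem focusing_caustic_formation (b : EReal) (hb : 0 < b)
    (θ dθ : ℝ → ℝ)
    (hdiff : ∀ l : ℝ, 0 ≤ l → (l : EReal) < b →
      HasDerivWithinAt θ (dθ l) {x : ℝ | 0 ≤ x ∧ (x : EReal) < b} l)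
    (hineq : ∀ l : ℝ, 0 ≤ l → (l : EReal) < b → dθ l ≤ -θ l ^ 2 / 2)
    (h0 : θ 0 < 0) :
    b ≤ ((-2 / θ 0 : ℝ) : EReal) :=
  focusing_caustic_formation_general b θ dθ hdiff hineq h0
end
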